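/- arXiv:1608.07539 — 3 statements merged into one kernel-verified Lean document; each statement's English description precedes it below -/
import Mathlib

section
/- Let (u₁,v₁) and (u₂,v₂) be two coordinate systems on an open set such that a Riemannian metric satisfies ds² = Λ₁(du₁² + dv₁²) = Λ₂(du₂² + dv₂²) with Λ₁, Λ₂ > 0, and assume the transition map (u₂,v₂) ↦ (u₁,v₁) is differentiable and orientation preserving. Then the transition map satisfies the Cauchy–Riemann equations: ∂u₁/∂u₂ = ∂v₁/∂v₂ and ∂u₁/∂v₂ = −∂v₁/∂u₂. -/
/-- If two coordinate systems express the same Riemannian metric in conformal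
(isothermal) form `Λ₁(du₁² + dv₁²) = Λ₂(du₂² + dv₂²)` with `Λ₁, Λ₂ > 0`, and the
transition map `(u₂,v₂) ↦ (u₁,v₁)` is differentiable and orientation preserving,
then the transition map satisfies the Cauchy–Riemann equations. -/
theorem isothermal_transition_cauchy_riemann (Ω : Set (ℝ × ℝ)) (hΩ : IsOpen Ω)
    (u₁ v₁ : ℝ × ℝ → ℝ) (Λ₁ Λ₂ : ℝ × ℝ → ℝ)
    (hu : ∀ w ∈ Ω, DifferentiableAt ℝ u₁ w)
    (hv : ∀ w ∈ Ω, DifferentiableAt ℝ v₁ w)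
    (hΛ₁ : ∀ w ∈ Ω, 0 < Λ₁ w) (hΛ₂ : ∀ w ∈ Ω, 0 < Λ₂ w)
    (hmetric : ∀ w ∈ Ω, ∀ ξ : ℝ × ℝ,
      Λ₁ w * ((fderiv ℝ u₁ w ξ) ^ 2 + (fderiv ℝ v₁ w ξ) ^ 2)
        = Λ₂ w * (ξ.1 ^ 2 + ξ.2 ^ 2))
    (horient : ∀ w ∈ Ω,
      0 < fderiv ℝ u₁ w (1, 0) * fderiv ℝ v₁ w (0, 1)
          - fderiv ℝ u₁ w (0, 1) * fderiv ℝ v₁ w (1, 0)) :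
    ∀ w ∈ Ω, fderiv ℝ u₁ w (1, 0) = fderiv ℝ v₁ w (0, 1)
      ∧ fderiv ℝ u₁ w (0, 1) = - fderiv ℝ v₁ w (1, 0) := by
  intro w hw
  set a := fderiv ℝ u₁ w (1, 0) with ha
  set b := fderiv ℝ u₁ w (0, 1) with hb
  set c := fderiv ℝ v₁ w (1, 0) with hc
  set d := fderiv ℝ v₁ w (0, 1) with hd
  have h11 : ((1 : ℝ), (1 : ℝ)) = ((1, 0) : ℝ × ℝ) + (0, 1) := by
    simp [Prod.ext_iff]
  have hsum_u : fderiv ℝ u₁ w (1, 1) = a + b := by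
    rw [h11, map_add]
  have hsum_v : fderiv ℝ v₁ w (1, 1) = c + d := by
    rw [h11, map_add]
  have e1 := hmetric w hw (1, 0)
  have e2 := hmetric w hw (0, 1)
  have e3 := hmetric w hw (1, 1)
  rw [hsum_u, hsum_v] at e3
  simp only [← ha, ← hb, ← hc, ← hd] at e1 e2 e3
  norm_num at e1 e2 e3
  have hΛ₁w := hΛ₁ w hw
  have hS : a ^ 2 + c ^ 2 = b ^ 2 + d ^ 2 := by
    have : Λ₁ w * (a ^ 2 + c ^ 2) = Λ₁ w * (b ^ 2 + d ^ 2) := by linarith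
    exact mul_left_cancel₀ (ne_of_gt hΛ₁w) this
  have hcross : a * b + c * d = 0 := by
    have h : Λ₁ w * (a * b + c * d) = 0 := by linear_combination (e3 - e1 - e2) / 2
    have := mul_eq_zero.mp h
    rcases this with h' | h'
    · exact absurd h' (ne_of_gt hΛ₁w)
    · exact h'
  have hor := horient w hw
  have hdet : a * d - b * c = a ^ 2 + c ^ 2 := by
    have key : (a * d - b * c) ^ 2 = (a ^ 2 + c ^ 2) ^ 2 := by
      linear_combination (-(a ^ 2 + c ^ 2)) * hS - (a * b + c * d) * hcross
    have hpos : 0 ≤ a ^ 2 + c ^ 2 := by positivity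
    have hfac : (a * d - b * c - (a ^ 2 + c ^ 2)) * (a * d - b * c + (a ^ 2 + c ^ 2)) = 0 := by
      linear_combination key
    have hne : a * d - b * c + (a ^ 2 + c ^ 2) ≠ 0 := by positivity
    have := (mul_eq_zero.mp hfac).resolve_right hne
    linarith
  have hzero : (a - d) ^ 2 + (b + c) ^ 2 = 0 := by
    linear_combination -hS - 2 * hdet
  constructor
  · nlinarith [hzero, sq_nonneg (a - d), sq_nonneg (b + c)]
  · nlinarith [hzero, sq_nonneg (a - d), sq_nonneg (b + c)]
end

section
/- Let χ : B₁ → ℂ be a map satisfying |χ(z₁) − χ(z₂)| ≤ C|z₁ − z₂|^α for all z₁, z₂ and |χ(z)| ≥ c|z|^{1/α} for all z, where C, c > 0 and α ∈ (0,1). Fix β > 1/α². Then there exists δ > 0 such that for all z₁, z₂ with 0 < |z₁| ≤ |z₂| and |z₁ − z₂| ≤ min(δ, |z₁|^β), one has |χ(z₂)/χ(z₁)| ≤ 2. -/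
open Complex Metric

/-- If `χ` is `α`-Hölder with `|χ(z)| ≥ c|z|^{1/α}` on the unit disc, and `β > 1/α²`,
then there is `δ > 0` such that whenever `0 < |z₁| ≤ |z₂|` and
`|z₁ − z₂| ≤ min(δ, |z₁|^β)`, one has `|χ(z₂)/χ(z₁)| ≤ 2`. -/
theorem quotient_bound_of_holder (χ : ℂ → ℂ) (C c α β : ℝ)
    (hC : 0 < C) (hc : 0 < c) (hα : 0 < α) (hα1 : α < 1) (hβ : 1 / α ^ 2 < β)
    (hHolder : ∀ z₁ ∈ ball (0:ℂ) 1, ∀ z₂ ∈ ball (0:ℂ) 1,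
      ‖χ z₁ - χ z₂‖ ≤ C * ‖z₁ - z₂‖ ^ α)
    (hLower : ∀ z ∈ ball (0:ℂ) 1, c * ‖z‖ ^ (1 / α) ≤ ‖χ z‖) :
    ∃ δ > 0, ∀ z₁ ∈ ball (0:ℂ) 1, ∀ z₂ ∈ ball (0:ℂ) 1,
      0 < ‖z₁‖ → ‖z₁‖ ≤ ‖z₂‖ → ‖z₁ - z₂‖ ≤ min δ (‖z₁‖ ^ β) →
      ‖χ z₂ / χ z₁‖ ≤ 2 := by
  have hβ0 : 0 < β := lt_trans (by positivity) hβ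
  set ε : ℝ := α - 1 / (α * β) with hε
  have hεpos : 0 < ε := by
    have h1 : 1 / (α * β) < α := by
      rw [div_lt_iff₀ (by positivity)]
      have : 1 / α ^ 2 * (α * α) < β * (α * α) := by
        apply mul_lt_mul_of_pos_right hβ (by positivity)
      calc (1:ℝ) = 1 / α ^ 2 * (α * α) := by field_simp
        _ < β * (α * α) := this
        _ = α * (α * β) := by ring
    rw [hε]; linarith
  refine ⟨min 1 ((c / C) ^ (1 / ε)), lt_min one_pos (Real.rpow_pos_of_pos (by positivity) _),
    fun z₁ hz₁ z₂ hz₂ hz₁pos hle hdist => ?_⟩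
  set r := ‖z₁ - z₂‖ with hr
  have hr0 : 0 ≤ r := norm_nonneg _
  have hχ₁ : c * ‖z₁‖ ^ (1 / α) ≤ ‖χ z₁‖ := hLower z₁ hz₁
  have hχ₁pos : 0 < ‖χ z₁‖ := lt_of_lt_of_le (by positivity) hχ₁
  have key : C * r ^ α ≤ c * ‖z₁‖ ^ (1 / α) := by
    rcases eq_or_lt_of_le hr0 with h0 | hrpos
    · rw [← h0, Real.zero_rpow (ne_of_gt hα), mul_zero]
      positivity
    · have hrδ : r ≤ (c / C) ^ (1 / ε) :=
        le_trans hdist (le_trans (min_le_left _ _) (min_le_right _ _))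
      have hrβ : r ≤ ‖z₁‖ ^ β := le_trans hdist (min_le_right _ _)
      have e1 : r ^ ε ≤ c / C := by
        calc r ^ ε ≤ ((c / C) ^ (1 / ε)) ^ ε :=
              Real.rpow_le_rpow hr0 hrδ hεpos.le
          _ = (c / C) ^ (1 / ε * ε) := (Real.rpow_mul (by positivity) _ _).symm
          _ = c / C := by
              rw [one_div, inv_mul_cancel₀ (ne_of_gt hεpos), Real.rpow_one]
      have e2 : r ^ (1 / (α * β)) ≤ ‖z₁‖ ^ (1 / α) := by
        calc r ^ (1 / (α * β)) ≤ (‖z₁‖ ^ β) ^ (1 / (α * β)) :=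
              Real.rpow_le_rpow hr0 hrβ (by positivity)
          _ = ‖z₁‖ ^ (β * (1 / (α * β))) := by
              rw [← Real.rpow_mul (norm_nonneg _)]
          _ = ‖z₁‖ ^ (1 / α) := by
              congr 1
              field_simp
      have : r ^ α = r ^ ε * r ^ (1 / (α * β)) := by
        rw [← Real.rpow_add hrpos]
        congr 1
        rw [hε]; ring
      rw [this]
      calc C * (r ^ ε * r ^ (1 / (α * β)))
          ≤ C * ((c / C) * ‖z₁‖ ^ (1 / α)) := by
            apply mul_le_mul_of_nonneg_left _ hC.le
            exact mul_le_mul e1 e2 (by positivity) (by positivity)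
        _ = c * ‖z₁‖ ^ (1 / α) := by field_simp
  have hχ₂ : ‖χ z₂‖ ≤ 2 * ‖χ z₁‖ := by
    have h1 : ‖χ z₂ - χ z₁‖ ≤ C * ‖z₂ - z₁‖ ^ α := hHolder z₂ hz₂ z₁ hz₁
    have h2 : ‖z₂ - z₁‖ = r := by rw [hr, norm_sub_rev]
    calc ‖χ z₂‖ ≤ ‖χ z₁‖ + ‖χ z₂ - χ z₁‖ := by
          have := norm_add_le (χ z₁) (χ z₂ - χ z₁); simpa using this
      _ ≤ ‖χ z₁‖ + C * r ^ α := by rw [← h2]; linarith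
      _ ≤ ‖χ z₁‖ + c * ‖z₁‖ ^ (1 / α) := by linarith
      _ ≤ 2 * ‖χ z₁‖ := by linarith
  rw [norm_div, div_le_iff₀ hχ₁pos]
  linarith
end

section
/- Let D : Ω → ℝ be C¹ with D ≥ C₀ > 0 on an open set Ω ⊂ ℝ², and let (x(u,v), y(u,v)) be a C² diffeomorphism satisfying the first-order relations √D x_u = h₁₂ x_v + h₂₂ y_v and √D x_v = −h₁₂ x_u − h₂₂ y_u, where h₁₂, h₂₂ are C¹ functions of (x,y). Then Δx = x_{uu} + x_{vv} = ((h₂₂/√D)_x − (h₁₂/√D)_y) · J(x,y), where J(x,y) = x_u y_v − x_v y_u and subscripts x, y denote partial derivatives in the (x,y)-variables. -/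
/-!
Dividing the two relations by `√D` turns them into `x_u = F x_v + G y_v` and
`x_v = -F x_u - G y_u` with `F = h₁₂/√D`, `G = h₂₂/√D`. Differentiating the first in `u`, the
second in `v` and adding, the second derivatives of `x` and `y` cancel by symmetry of the mixed
partials, leaving `(F∘φ)_u x_v - (F∘φ)_v x_u + (G∘φ)_u y_v - (G∘φ)_v y_u` for `φ = (x, y)`.
By the chain rule this is `-F_y J + G_x J`.
-/

open Filter Topology

section

variable {𝕜 E F G : Type*} [NontriviallyNormedField 𝕜]
  [NormedAddCommGroup E] [NormedSpace 𝕜 E] [NormedAddCommGroup F] [NormedSpace 𝕜 F]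
  [NormedAddCommGroup G] [NormedSpace 𝕜 G]

theorem fderiv_clm_apply_const {c : E → F →L[𝕜] G} {w : E} (hc : DifferentiableAt 𝕜 c w)
    (z : E) (u : F) : fderiv 𝕜 (fun w' => c w' u) w z = fderiv 𝕜 c w z u := by
  simp [fderiv_clm_apply hc (differentiableAt_const u)]

end

section

variable {E : Type*} [NormedAddCommGroup E] [NormedSpace ℝ E]

theorem ContDiffAt.div_sqrt {n : WithTop ℕ∞} {h D : E → ℝ} {z : E} (hh : ContDiffAt ℝ n h z)
    (hD : ContDiffAt ℝ n D z) (hDz : 0 < D z) :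
    ContDiffAt ℝ n (fun z => h z / Real.sqrt (D z)) z :=
  hh.div (hD.sqrt hDz.ne') (Real.sqrt_pos.mpr hDz).ne'

theorem fderiv_apply_of_eventuallyEq_mul_add_mul {a b c p q : E → ℝ} {w : E}
    (h : a =ᶠ[𝓝 w] fun w' => p w' * b w' + q w' * c w')
    (hb : DifferentiableAt ℝ b w) (hc : DifferentiableAt ℝ c w)
    (hp : DifferentiableAt ℝ p w) (hq : DifferentiableAt ℝ q w) (z : E) :
    fderiv ℝ a w z
      = fderiv ℝ p w z * b w + p w * fderiv ℝ b w z
        + (fderiv ℝ q w z * c w + q w * fderiv ℝ c w z) := by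
  rw [h.fderiv_eq, fderiv_fun_add (hp.fun_mul hb) (hq.fun_mul hc), fderiv_fun_mul hp hb,
    fderiv_fun_mul hq hc]
  simp only [add_apply, smul_apply, smul_eq_mul]
  ring

theorem fderiv_comp_prodMk_apply {Φ : ℝ × ℝ → ℝ} {x y : E → ℝ} {w : E}
    (hΦ : DifferentiableAt ℝ Φ (x w, y w)) (hx : DifferentiableAt ℝ x w)
    (hy : DifferentiableAt ℝ y w) (z : E) :
    fderiv ℝ (fun w' => Φ (x w', y w')) w z
      = fderiv ℝ x w z * fderiv ℝ Φ (x w, y w) (1, 0)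
        + fderiv ℝ y w z * fderiv ℝ Φ (x w, y w) (0, 1) := by
  have hpair : ((fderiv ℝ x w z, fderiv ℝ y w z) : ℝ × ℝ)
      = fderiv ℝ x w z • ((1 : ℝ), (0 : ℝ)) + fderiv ℝ y w z • ((0 : ℝ), (1 : ℝ)) := by
    simp
  rw [fderiv_fun_comp w hΦ (hx.prodMk hy), ContinuousLinearMap.comp_apply,
    (hx.hasFDerivAt.prodMk hy.hasFDerivAt).fderiv, ContinuousLinearMap.prod_apply, hpair,
    map_add, map_smul, map_smul, smul_eq_mul, smul_eq_mul]

theorem fderiv_fderiv_add_eq_of_eventually_system {f g p q : E → ℝ} {w u v : E}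
    (hf : ContDiffAt ℝ 2 f w) (hg : ContDiffAt ℝ 2 g w)
    (hp : DifferentiableAt ℝ p w) (hq : DifferentiableAt ℝ q w)
    (hu : ∀ᶠ w' in 𝓝 w, fderiv ℝ f w' u = p w' * fderiv ℝ f w' v + q w' * fderiv ℝ g w' v)
    (hv : ∀ᶠ w' in 𝓝 w,
      fderiv ℝ f w' v = -(p w' * fderiv ℝ f w' u) - q w' * fderiv ℝ g w' u) :
    fderiv ℝ (fun w' => fderiv ℝ f w' u) w u + fderiv ℝ (fun w' => fderiv ℝ f w' v) w v
      = fderiv ℝ p w u * fderiv ℝ f w v - fderiv ℝ p w v * fderiv ℝ f w u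
        + (fderiv ℝ q w u * fderiv ℝ g w v - fderiv ℝ q w v * fderiv ℝ g w u) := by
  have hf' : DifferentiableAt ℝ (fderiv ℝ f) w :=
    (hf.fderiv_right (m := 1) le_rfl).differentiableAt one_ne_zero
  have hg' : DifferentiableAt ℝ (fderiv ℝ g) w :=
    (hg.fderiv_right (m := 1) le_rfl).differentiableAt one_ne_zero
  have hv' : ∀ᶠ w' in 𝓝 w,
      fderiv ℝ f w' v = -p w' * fderiv ℝ f w' u + -q w' * fderiv ℝ g w' u :=
    hv.mono fun w' h => h.trans (by ring)
  rw [fderiv_apply_of_eventuallyEq_mul_add_mul hu (hf'.clm_apply (differentiableAt_const v))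
      (hg'.clm_apply (differentiableAt_const v)) hp hq u,
    fderiv_apply_of_eventuallyEq_mul_add_mul hv' (hf'.clm_apply (differentiableAt_const u))
      (hg'.clm_apply (differentiableAt_const u)) hp.fun_neg hq.fun_neg v,
    fderiv_fun_neg, fderiv_fun_neg, fderiv_clm_apply_const hf', fderiv_clm_apply_const hf',
    fderiv_clm_apply_const hg', fderiv_clm_apply_const hg',
    hf.isSymmSndFDerivAt (by simp) u v, hg.isSymmSndFDerivAt (by simp) u v]
  simp only [neg_apply]
  ring

end

theorem heinz_laplacian_identity_general
    (Ω Ω' : Set (ℝ × ℝ)) (hΩ : IsOpen Ω) (hΩ' : IsOpen Ω')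
    (x y : ℝ × ℝ → ℝ) (h₁₂ h₂₂ D : ℝ × ℝ → ℝ) (C₀ : ℝ) (hC₀ : 0 < C₀)
    (hx : ContDiffOn ℝ 2 x Ω) (hy : ContDiffOn ℝ 2 y Ω)
    (hmaps : ∀ w ∈ Ω, (x w, y w) ∈ Ω')
    (h12reg : ContDiffOn ℝ 1 h₁₂ Ω') (h22reg : ContDiffOn ℝ 1 h₂₂ Ω')
    (hDreg : ContDiffOn ℝ 1 D Ω')
    (hDpos : ∀ z ∈ Ω', C₀ ≤ D z)
    (hrel1 : ∀ w ∈ Ω,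
      Real.sqrt (D (x w, y w)) * fderiv ℝ x w (1, 0)
        = h₁₂ (x w, y w) * fderiv ℝ x w (0, 1) + h₂₂ (x w, y w) * fderiv ℝ y w (0, 1))
    (hrel2 : ∀ w ∈ Ω,
      Real.sqrt (D (x w, y w)) * fderiv ℝ x w (0, 1)
        = -(h₁₂ (x w, y w) * fderiv ℝ x w (1, 0)) - h₂₂ (x w, y w) * fderiv ℝ y w (1, 0)) :
    ∀ w ∈ Ω,
      fderiv ℝ (fun w' => fderiv ℝ x w' (1, 0)) w (1, 0)
        + fderiv ℝ (fun w' => fderiv ℝ x w' (0, 1)) w (0, 1)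
      = (fderiv ℝ (fun z => h₂₂ z / Real.sqrt (D z)) (x w, y w) (1, 0)
          - fderiv ℝ (fun z => h₁₂ z / Real.sqrt (D z)) (x w, y w) (0, 1))
        * (fderiv ℝ x w (1, 0) * fderiv ℝ y w (0, 1)
            - fderiv ℝ x w (0, 1) * fderiv ℝ y w (1, 0)) := by
  intro w hw
  set F : ℝ × ℝ → ℝ := fun z => h₁₂ z / Real.sqrt (D z)
  set G : ℝ × ℝ → ℝ := fun z => h₂₂ z / Real.sqrt (D z)
  have hDφ : ∀ w' ∈ Ω, 0 < D (x w', y w') := fun w' hw' => hC₀.trans_le (hDpos _ (hmaps w' hw'))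
  have hz : ∀ h : ℝ × ℝ → ℝ, ContDiffOn ℝ 1 h Ω' → ContDiffAt ℝ 1 h (x w, y w) :=
    fun h hh => hh.contDiffAt (hΩ'.mem_nhds (hmaps w hw))
  have hF : DifferentiableAt ℝ F (x w, y w) :=
    ((hz h₁₂ h12reg).div_sqrt (hz D hDreg) (hDφ w hw)).differentiableAt one_ne_zero
  have hG : DifferentiableAt ℝ G (x w, y w) :=
    ((hz h₂₂ h22reg).div_sqrt (hz D hDreg) (hDφ w hw)).differentiableAt one_ne_zero
  have hxw : ContDiffAt ℝ 2 x w := hx.contDiffAt (hΩ.mem_nhds hw)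
  have hyw : ContDiffAt ℝ 2 y w := hy.contDiffAt (hΩ.mem_nhds hw)
  have hxd := hxw.differentiableAt two_ne_zero
  have hyd := hyw.differentiableAt two_ne_zero
  have hsys₁ : ∀ᶠ w' in 𝓝 w, fderiv ℝ x w' (1, 0)
      = F (x w', y w') * fderiv ℝ x w' (0, 1) + G (x w', y w') * fderiv ℝ y w' (0, 1) := by
    filter_upwards [hΩ.mem_nhds hw] with w' hw'
    have := (Real.sqrt_pos.mpr (hDφ w' hw')).ne'
    simp only [F, G]
    field_simp
    linear_combination hrel1 w' hw'
  have hsys₂ : ∀ᶠ w' in 𝓝 w, fderiv ℝ x w' (0, 1)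
      = -(F (x w', y w') * fderiv ℝ x w' (1, 0)) - G (x w', y w') * fderiv ℝ y w' (1, 0) := by
    filter_upwards [hΩ.mem_nhds hw] with w' hw'
    have := (Real.sqrt_pos.mpr (hDφ w' hw')).ne'
    simp only [F, G]
    field_simp
    linear_combination hrel2 w' hw'
  have hFφ : DifferentiableAt ℝ (fun w' => F (x w', y w')) w := (hF.comp w (hxd.prodMk hyd) :)
  have hGφ : DifferentiableAt ℝ (fun w' => G (x w', y w')) w := (hG.comp w (hxd.prodMk hyd) :)
  rw [fderiv_fderiv_add_eq_of_eventually_system hxw hyw hFφ hGφ hsys₁ hsys₂,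
    fderiv_comp_prodMk_apply hF hxd hyd, fderiv_comp_prodMk_apply hF hxd hyd,
    fderiv_comp_prodMk_apply hG hxd hyd, fderiv_comp_prodMk_apply hG hxd hyd]
  ring

/-- Heinz's computation: if `(x, y)` is a `C²` diffeomorphism of a planar domain `Ω`
onto `Ω'` satisfying `√D x_u = h₁₂ x_v + h₂₂ y_v` and `√D x_v = −h₁₂ x_u − h₂₂ y_u`
(with `D, h₁₂, h₂₂` being `C¹` functions of the image variables `(x,y)` and
`D ≥ C₀ > 0`), then `Δx = ((h₂₂/√D)_x − (h₁₂/√D)_y) · J(x,y)`, where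
`J(x,y) = x_u y_v − x_v y_u`. -/
theorem heinz_laplacian_identity
    (Ω Ω' : Set (ℝ × ℝ)) (hΩ : IsOpen Ω) (hΩ' : IsOpen Ω')
    (x y : ℝ × ℝ → ℝ) (h₁₂ h₂₂ D : ℝ × ℝ → ℝ) (C₀ : ℝ) (hC₀ : 0 < C₀)
    (hx : ContDiffOn ℝ 2 x Ω) (hy : ContDiffOn ℝ 2 y Ω)
    (hmaps : ∀ w ∈ Ω, (x w, y w) ∈ Ω')
    (hbij : Set.InjOn (fun w => (x w, y w)) Ω)
    (h12reg : ContDiffOn ℝ 1 h₁₂ Ω') (h22reg : ContDiffOn ℝ 1 h₂₂ Ω')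
    (hDreg : ContDiffOn ℝ 1 D Ω')
    (hDpos : ∀ z ∈ Ω', C₀ ≤ D z)
    (hrel1 : ∀ w ∈ Ω,
      Real.sqrt (D (x w, y w)) * fderiv ℝ x w (1, 0)
        = h₁₂ (x w, y w) * fderiv ℝ x w (0, 1) + h₂₂ (x w, y w) * fderiv ℝ y w (0, 1))
    (hrel2 : ∀ w ∈ Ω,
      Real.sqrt (D (x w, y w)) * fderiv ℝ x w (0, 1)
        = -(h₁₂ (x w, y w) * fderiv ℝ x w (1, 0)) - h₂₂ (x w, y w) * fderiv ℝ y w (1, 0)) :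
    ∀ w ∈ Ω,
      fderiv ℝ (fun w' => fderiv ℝ x w' (1, 0)) w (1, 0)
        + fderiv ℝ (fun w' => fderiv ℝ x w' (0, 1)) w (0, 1)
      = (fderiv ℝ (fun z => h₂₂ z / Real.sqrt (D z)) (x w, y w) (1, 0)
          - fderiv ℝ (fun z => h₁₂ z / Real.sqrt (D z)) (x w, y w) (0, 1))
        * (fderiv ℝ x w (1, 0) * fderiv ℝ y w (0, 1)
            - fderiv ℝ x w (0, 1) * fderiv ℝ y w (1, 0)) :=
  heinz_laplacian_identity_general Ω Ω' hΩ hΩ' x y h₁₂ h₂₂ D C₀ hC₀ hx hy hmaps h12reg h22reg hDreg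
    hDpos hrel1 hrel2
end
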